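/- Let L be a levellised n-lattice, m ≥ 1, and A_n,…,A_{n+m−1} ⊆ L \ {0} satisfying the conditions making L̃ = L_{A_n,…,A_{n+m−1}} a levellised lattice. If L is vertically decomposable, then L̃ is vertically decomposable. -/

import Mathlib

namespace PaperLattice

variable {N : ℕ}

/-- Depth: one less than the maximum length of a chain from `t` down to `a` w.r.t. `le`. -/
noncomputable def dep (le : Fin N → Fin N → Prop) (t a : Fin N) : ℕ :=
  sSup {k | ∃ l : List (Fin N), List.Chain' (fun x y => le y x ∧ y ≠ x) l ∧
    l.head? = some t ∧ l.getLast? = some a ∧ l.length = k + 1}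

/-- The `d`-th level: elements of depth `d`. -/
noncomputable def lev (le : Fin N → Fin N → Prop) (t : Fin N) (d : ℕ) : Set (Fin N) :=
  {a | dep le t a = d}

/-- A labelled poset is levellised if depth is monotone in the nonzero labels. -/
def Levellised (le : Fin N → Fin N → Prop) (t : Fin N) : Prop :=
  ∀ i j : Fin N, 0 < (i : ℕ) → (i : ℕ) ≤ (j : ℕ) → dep le t i ≤ dep le t j

def lt' (le : Fin N → Fin N → Prop) (a b : Fin N) : Prop := le a b ∧ a ≠ b

/-- `b` covers `a`. -/
def CovByRel (le : Fin N → Fin N → Prop) (a b : Fin N) : Prop :=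
  lt' le a b ∧ ∀ x, lt' le a x → lt' le x b → False

/-- The covering set of `a`. -/
def cov (le : Fin N → Fin N → Prop) (a : Fin N) : Set (Fin N) := {b | CovByRel le a b}

/-- The up-set of `A`. -/
def upset (le : Fin N → Fin N → Prop) (A : Set (Fin N)) : Set (Fin N) :=
  {x | ∃ a ∈ A, le a x}

def AntichainRel (le : Fin N → Fin N → Prop) (A : Set (Fin N)) : Prop :=
  ∀ a ∈ A, ∀ b ∈ A, a ≠ b → ¬ le a b

/-- Binary weight of a set of labels. -/
noncomputable def wt (A : Set (Fin N)) : ℕ :=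
  ∑ j : Fin N, A.indicator (fun j => 2 ^ (j : ℕ)) j

/-- `z` is a bottom and `o` a top for `le`. -/
def Bounds (le : Fin N → Fin N → Prop) (z o : Fin N) : Prop :=
  (∀ a, le z a) ∧ (∀ a, le a o)

/-- The order obtained from `le` by adding `m` new atoms, the `i`-th having covering set `A i`. -/
def extLe {n m : ℕ} (le : Fin n → Fin n → Prop) (A : Fin m → Set (Fin n)) :
    Fin (n + m) → Fin (n + m) → Prop := fun x y =>
  if hx : (x : ℕ) < n then
    if hy : (y : ℕ) < n then le ⟨x, hx⟩ ⟨y, hy⟩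
    else (x : ℕ) = 0
  else
    if hy : (y : ℕ) < n then
      (⟨y, hy⟩ : Fin n) ∈ upset le (A ⟨(x : ℕ) - n, by have := x.isLt; omega⟩)
    else x = y

/-- The relabelled order `π(L)`. -/
def permLe {n : ℕ} (π : Equiv.Perm (Fin n)) (le : Fin n → Fin n → Prop) :
    Fin n → Fin n → Prop := fun a b => le (π.symm a) (π.symm b)


/-- `A` is a lattice-antichain for `L` (with bottom `z`). -/
def IsLatticeAntichain {n : ℕ} (L : Lattice (Fin n)) (z : Fin n) (A : Set (Fin n)) : Prop :=
  A.Nonempty ∧ (∀ a ∈ A, a ≠ z) ∧ AntichainRel L.le A ∧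
    ∀ a ∈ upset L.le A, ∀ b ∈ upset L.le A,
      L.inf a b = z ∨ L.inf a b ∈ upset L.le A

/-- Vertical decomposability: some element other than the bottom `z` and top `o` is
comparable to every element. -/
def VertDecomp {N : ℕ} (le : Fin N → Fin N → Prop) (z o : Fin N) : Prop :=
  ∃ i : Fin N, i ≠ z ∧ i ≠ o ∧ ∀ j, le i j ∨ le j i

/-!
Keep the element `i` witnessing vertical decomposability of `L`. It stays comparable to
the old elements, so it suffices that it lies above every new atom, i.e. above some element
of each covering set `A j`. Pick `a ∈ A j` of depth `k = dep (n - 1)`. If `i ≤ a`, then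
`i = a`: a strict inequality would make `dep i > dep a = k`, whereas levellisation gives
`dep i ≤ dep (n - 1) = k` since `i ≠ 0`. Hence `a ≤ i` in either case.
-/

section Depth

variable {N : ℕ} (P : PartialOrder (Fin N))

def chainLengths (t a : Fin N) : Set ℕ :=
  {k | ∃ l : List (Fin N), List.IsChain (fun x y => P.le y x ∧ y ≠ x) l ∧
    l.head? = some t ∧ l.getLast? = some a ∧ l.length = k + 1}

theorem dep_eq_sSup_chainLengths (t a : Fin N) : dep P.le t a = sSup (chainLengths P t a) :=
  rfl

theorem bddAbove_chainLengths (t a : Fin N) : BddAbove (chainLengths P t a) := by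
  let R : Fin N → Fin N → Prop := fun x y => P.le y x ∧ y ≠ x
  have : Trans R R R := ⟨fun {x y z} hxy hyz =>
    ⟨P.le_trans _ _ _ hyz.1 hxy.1, fun hzx => hxy.2 (P.le_antisymm _ _ hxy.1 (hzx ▸ hyz.1))⟩⟩
  refine ⟨N, fun k ⟨l, hchain, _, _, hlen⟩ => ?_⟩
  have hnodup : l.Nodup := ((List.isChain_iff_pairwise (R := R)).mp hchain).imp (·.2.symm)
  have := hnodup.length_le_card
  simp only [Fintype.card_fin] at this
  omega

theorem chainLengths_nonempty {t : Fin N} (ht : ∀ x, P.le x t) (a : Fin N) :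
    (chainLengths P t a).Nonempty := by
  by_cases h : a = t
  · exact ⟨0, [t], by simp, by simp, by simp [h], by simp⟩
  · exact ⟨1, [t, a], by simp [List.isChain_cons_cons, ht a, h], by simp, by simp, by simp⟩

theorem dep_lt_dep_of_lt {t a b : Fin N} (ht : ∀ x, P.le x t) (hba : P.le b a) (hne : b ≠ a) :
    dep P.le t a < dep P.le t b := by
  obtain ⟨l, hchain, hhead, hlast, hlen⟩ :=
    Nat.sSup_mem (chainLengths_nonempty P ht a) (bddAbove_chainLengths P t a)
  have hext : dep P.le t a + 1 ∈ chainLengths P t b := by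
    refine ⟨l ++ [b], ?_, by rw [List.head?_append, hhead]; rfl, List.getLast?_concat,
      by simp [hlen, dep_eq_sSup_chainLengths]⟩
    refine List.isChain_append.mpr ⟨hchain, by simp, fun x hx y hy => ?_⟩
    rw [hlast, Option.mem_some_iff] at hx
    rw [List.head?_singleton, Option.mem_some_iff] at hy
    subst hx hy
    exact ⟨hba, hne⟩
  exact Nat.lt_of_succ_le (le_csSup (bddAbove_chainLengths P t b) hext)

theorem eq_of_le_of_dep_le {t a b : Fin N} (ht : ∀ x, P.le x t) (hba : P.le b a)
    (hdep : dep P.le t b ≤ dep P.le t a) : b = a := by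
  by_contra hne
  exact (dep_lt_dep_of_lt P ht hba hne).not_ge hdep

end Depth

theorem extLe_castAdd_comparable {n m : ℕ} {le : Fin n → Fin n → Prop}
    {A : Fin m → Set (Fin n)} {i : Fin n} (hcomp : ∀ j, le i j ∨ le j i)
    (hup : ∀ j, i ∈ upset le (A j)) (x : Fin (n + m)) :
    extLe le A (i.castAdd m) x ∨ extLe le A x (i.castAdd m) := by
  by_cases hx : (x : ℕ) < n
  · simpa [extLe, hx] using hcomp ⟨x, hx⟩
  · right
    simpa [extLe, hx] using hup ⟨x - n, by omega⟩

theorem VertDecomp.extLe {n m : ℕ} {le : Fin n → Fin n → Prop} {A : Fin m → Set (Fin n)}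
    {z o i : Fin n} (hiz : i ≠ z) (hio : i ≠ o) (hcomp : ∀ j, le i j ∨ le j i)
    (hup : ∀ j, i ∈ upset le (A j)) :
    VertDecomp (extLe le A) (z.castAdd m) (o.castAdd m) :=
  ⟨i.castAdd m, by simpa using hiz, by simpa using hio, extLe_castAdd_comparable hcomp hup⟩

theorem statement8 {n m : ℕ} (hn : 2 ≤ n) (L : Lattice (Fin n))
    (hb : Bounds L.le ⟨0, by omega⟩ ⟨1, by omega⟩)
    (hlev : Levellised L.le ⟨1, by omega⟩)
    (k : ℕ) (hk : dep L.le ⟨1, by omega⟩ ⟨n - 1, by omega⟩ = k)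
    (A : Fin m → Set (Fin n))
    (hB1 : ∀ i : Fin m, (A i ∩ lev L.le ⟨1, by omega⟩ k).Nonempty) :
    VertDecomp L.le ⟨0, by omega⟩ ⟨1, by omega⟩ →
      VertDecomp (extLe L.le A) ⟨0, by omega⟩ ⟨1, by omega⟩ := by
  rintro ⟨i, hi0, hi1, hcomp⟩
  refine VertDecomp.extLe hi0 hi1 hcomp fun j => ?_
  obtain ⟨a, haA, hak⟩ := hB1 j
  have hdep : dep L.le ⟨1, by omega⟩ i ≤ dep L.le ⟨1, by omega⟩ a := by
    have hipos : 0 < (i : ℕ) := Nat.pos_of_ne_zero fun h => hi0 (Fin.ext h)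
    calc dep L.le ⟨1, by omega⟩ i ≤ dep L.le ⟨1, by omega⟩ ⟨n - 1, by omega⟩ :=
          hlev _ _ hipos (by simp only; omega)
      _ = dep L.le ⟨1, by omega⟩ a := hk.trans hak.symm
  rcases hcomp a with hia | hai
  · obtain rfl := eq_of_le_of_dep_le L.toPartialOrder hb.2 hia hdep
    exact ⟨i, haA, L.le_refl i⟩
  · exact ⟨a, haA, hai⟩

end PaperLattice
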